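/- Graph bound with a marked vertex: Let 𝒢 be a connected graph with m 'black' vertices and one additional 'white' vertex carrying a fixed index j, with E edges in total. Let G be n×n with |G_{ab}| ≤ C and (1/n)∑_b|G_{ab}|² ≤ C/(nη). Then (1/n^m) ∑_{i_1,…,i_m} ∏_{(a,b)∈𝒢} |G_{i_a i_b}| ≤ C^{E+m} (nη)^{-m/2}, where indices at the white vertex are fixed to j and black vertex indices are summed. -/

import Mathlib

/-!
Root a spanning tree of the graph at the white vertex: each black vertex gets a parent edge
along which the graph distance to the root strictly decreases, and distinct black vertices get
distinct edges. The `E - m` edges outside the tree are bounded by `C`. The tree is then summed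
out leaf first (a black vertex of maximal distance), and by Cauchy–Schwarz and the Ward bound
every column sum is at most `n √(C / (nη))`, so each of the `m` black vertices contributes
`√(C / (nη))` after the normalisation `1 / n`. No factor is spent on the root, whose index is
fixed; this is the gain over the unmarked bound.
-/

open Finset Function

section TreeSum

variable {β ι : Type*} [Fintype β] [DecidableEq β] [Fintype ι]

theorem sum_comp_update {M : Type*} [AddCommMonoid M] (v : β) (F : (β → ι) → M) :
    ∑ q : (β → ι) × ι, F (update q.1 v q.2) = Fintype.card ι • ∑ i, F i := by
  let e : (β → ι) × ι ≃ (β → ι) × ι :=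
    { toFun := fun q => (update q.1 v q.2, q.1 v)
      invFun := fun q => (update q.1 v q.2, q.1 v)
      left_inv := fun q => by simp
      right_inv := fun q => by simp }
  calc ∑ q : (β → ι) × ι, F (update q.1 v q.2) = ∑ q, F (e q).1 := rfl
    _ = ∑ q : (β → ι) × ι, F q.1 := e.sum_comp fun q => F q.1
    _ = Fintype.card ι • ∑ i, F i := by
      rw [Fintype.sum_prod_type, Finset.sum_comm]; simp

theorem sum_mul_kernel_le [Nonempty ι] {B : ℝ} {a : ι → ι → ℝ}
    (hcol : ∀ y, ∑ x, a x y ≤ Fintype.card ι * B) (v : β) {F : (β → ι) → ℝ}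
    (hF0 : ∀ i, 0 ≤ F i) (hF : ∀ i x, F (update i v x) = F i) {c : (β → ι) → ι}
    (hc : ∀ i x, c (update i v x) = c i) :
    ∑ i, F i * a (i v) (c i) ≤ B * ∑ i, F i := by
  have hcard : (0 : ℝ) < Fintype.card ι := by exact_mod_cast Fintype.card_pos
  refine le_of_mul_le_mul_left ?_ hcard
  calc (Fintype.card ι : ℝ) * ∑ i, F i * a (i v) (c i)
      = ∑ i, F i * ∑ x, a x (c i) := by
        rw [← nsmul_eq_mul, ← sum_comp_update v, Fintype.sum_prod_type]
        simp [hF, hc, Finset.mul_sum]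
    _ ≤ ∑ i, F i * (Fintype.card ι * B) :=
        sum_le_sum fun i _ => mul_le_mul_of_nonneg_left (hcol _) (hF0 i)
    _ = Fintype.card ι * (B * ∑ i, F i) := by rw [← sum_mul]; ring

theorem sum_prod_tree_le {γ : Type*} [Nonempty ι] {B : ℝ} {a : ι → ι → ℝ}
    (ha : ∀ x y, 0 ≤ a x y) (hcol : ∀ y, ∑ x, a x y ≤ Fintype.card ι * B) (r : γ → ι)
    {p : β → β ⊕ γ} {D : β ⊕ γ → ℕ} (hD : ∀ v, D (p v) < D (.inl v)) (S : Finset β) :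
    ∑ i : β → ι, ∏ v ∈ S, a (i v) (Sum.elim i r (p v))
      ≤ B ^ #S * Fintype.card ι ^ Fintype.card β := by
  have hB : 0 ≤ B := by
    have h := (sum_nonneg fun x _ => ha x (Classical.arbitrary ι)).trans
      (hcol (Classical.arbitrary ι))
    exact nonneg_of_mul_nonneg_right h (by exact_mod_cast Fintype.card_pos)
  induction S using Finset.strongInduction with
  | _ S ih =>
    rcases S.eq_empty_or_nonempty with rfl | hS
    · simp
    obtain ⟨v, hvS, hvmax⟩ := S.exists_max_image (fun u => D (.inl u)) hS
    -- `v` has maximal potential in `S`, so it is the parent of no vertex of `S`.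
    have hleaf : ∀ w ∈ S, p w ≠ .inl v := fun w hw h => by
      have hdesc := hD w
      rw [h] at hdesc
      exact absurd (hvmax w hw) (by omega)
    have hupd : ∀ (i : β → ι) x, ∀ w ∈ S,
        Sum.elim (update i v x) r (p w) = Sum.elim i r (p w) := fun i x w hw => by
      rcases h : p w with u | u
      · simp [update_of_ne (show u ≠ v by rintro rfl; exact hleaf w hw h)]
      · rfl
    calc ∑ i : β → ι, ∏ w ∈ S, a (i w) (Sum.elim i r (p w))
        = ∑ i : β → ι, (∏ w ∈ S.erase v, a (i w) (Sum.elim i r (p w)))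
            * a (i v) (Sum.elim i r (p v)) := by
          simp only [prod_erase_mul _ _ hvS]
      _ ≤ B * ∑ i : β → ι, ∏ w ∈ S.erase v, a (i w) (Sum.elim i r (p w)) := by
          refine sum_mul_kernel_le hcol v (fun i => prod_nonneg fun _ _ => ha _ _)
            (fun i x => prod_congr rfl fun w hw => ?_) (fun i x => hupd i x v hvS)
          rw [update_of_ne (ne_of_mem_erase hw),
            hupd i x w (mem_of_mem_erase hw)]
      _ ≤ B * (B ^ #(S.erase v) * Fintype.card ι ^ Fintype.card β) :=
          mul_le_mul_of_nonneg_left (ih _ (erase_ssubset hvS)) hB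
      _ = B ^ #S * Fintype.card ι ^ Fintype.card β := by
          rw [← mul_assoc, ← pow_succ', card_erase_add_one hvS]

end TreeSum

theorem SimpleGraph.Connected.exists_adj_dist_lt {V : Type*} {G : SimpleGraph V}
    (hG : G.Connected) {v r : V} (hv : v ≠ r) : ∃ u, G.Adj v u ∧ G.dist u r < G.dist v r := by
  obtain ⟨w, hw⟩ := hG.exists_walk_length_eq_dist v r
  obtain ⟨u, hadj, q, rfl⟩ := SimpleGraph.Walk.exists_eq_cons_of_ne hv w
  have := SimpleGraph.dist_le q
  exact ⟨u, hadj, by rw [SimpleGraph.Walk.length_cons] at hw; omega⟩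

theorem exists_descending_edge_of_connected {V E : Type*} {edges : E → V × V}
    (hconn : (SimpleGraph.fromRel fun a b => ∃ k, edges k = (a, b)).Connected) (root : V) :
    ∃ D : V → ℕ, ∀ v ≠ root, ∃ u k, (edges k = (v, u) ∨ edges k = (u, v)) ∧ D u < D v := by
  refine ⟨((SimpleGraph.fromRel fun a b => ∃ k, edges k = (a, b)).dist · root), fun v hv => ?_⟩
  obtain ⟨u, hadj, hlt⟩ := hconn.exists_adj_dist_lt hv
  obtain ⟨-, ⟨k, hk⟩ | ⟨k, hk⟩⟩ := SimpleGraph.fromRel_adj _ _ _ |>.mp hadj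
  exacts [⟨u, k, .inl hk, hlt⟩, ⟨u, k, .inr hk, hlt⟩]

theorem injective_of_descending_edges {β V E : Type*} {edges : E → V × V} {f : β → V}
    (hf : Injective f) {p : β → V} {σ : β → E} {D : V → ℕ}
    (hσ : ∀ v, edges (σ v) = (f v, p v) ∨ edges (σ v) = (p v, f v))
    (hD : ∀ v, D (p v) < D (f v)) : Injective σ := by
  intro a b hab
  have hDa := hD a
  have hDb := hD b
  rcases hσ a with ha | ha <;> rcases hσ b with hb | hb <;> rw [hab, hb, Prod.mk.injEq] at ha
  · exact hf ha.1.symm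
  · rw [← ha.1, ← ha.2] at hDa; omega
  · rw [← ha.1, ← ha.2] at hDa; omega
  · exact hf ha.2.symm

theorem prod_le_pow_mul_prod_comp {α β : Type*} [Fintype α] [Fintype β] {f : α → ℝ} {C : ℝ}
    (hfC : ∀ k, f k ≤ C) (hf0 : ∀ k, 0 ≤ f k) {σ : β → α} (hσ : Injective σ) :
    ∏ k, f k ≤ C ^ (Fintype.card α - Fintype.card β) * ∏ v, f (σ v) := by
  classical
  rw [← prod_mul_prod_compl (univ.image σ), prod_image hσ.injOn, mul_comm]
  refine mul_le_mul_of_nonneg_right ?_ (prod_nonneg fun _ _ => hf0 _)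
  calc ∏ k ∈ (univ.image σ)ᶜ, f k ≤ ∏ _k ∈ (univ.image σ)ᶜ, C :=
        prod_le_prod (fun k _ => hf0 k) fun k _ => hfC k
    _ = C ^ #(univ.image σ)ᶜ := prod_const C
    _ = C ^ (Fintype.card α - Fintype.card β) := by
        rw [card_compl, card_image_of_injective _ hσ, card_univ]

theorem sum_le_card_mul_of_sum_sq_le {ι : Type*} [Fintype ι] {f : ι → ℝ} {B : ℝ} (hB : 0 ≤ B)
    (h : ∑ x, f x ^ 2 ≤ Fintype.card ι * B ^ 2) : ∑ x, f x ≤ Fintype.card ι * B := by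
  refine (le_abs_self _).trans (abs_le_of_sq_le_sq ?_ (by positivity))
  calc (∑ x, f x) ^ 2 ≤ Fintype.card ι * ∑ x, f x ^ 2 := sq_sum_le_card_mul_sum_sq
    _ ≤ Fintype.card ι * (Fintype.card ι * B ^ 2) := by gcongr
    _ = (Fintype.card ι * B) ^ 2 := by ring

theorem sqrt_div_pow_le {C t : ℝ} (hC : 1 ≤ C) (ht : 0 < t) (m : ℕ) :
    √(C / t) ^ m ≤ C ^ m * t ^ (-((m : ℝ) / 2)) := by
  have hC0 : 0 ≤ C := zero_le_one.trans hC
  calc √(C / t) ^ m = C ^ ((m : ℝ) / 2) * t ^ (-((m : ℝ) / 2)) := by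
        rw [Real.sqrt_eq_rpow, ← Real.rpow_natCast, ← Real.rpow_mul (by positivity),
          Real.div_rpow hC0 ht.le, Real.rpow_neg ht.le, div_eq_mul_inv]
        ring_nf
    _ ≤ C ^ m * t ^ (-((m : ℝ) / 2)) := by
        gcongr
        rw [← Real.rpow_natCast]
        exact Real.rpow_le_rpow_of_exponent_le hC (half_le_self m.cast_nonneg)

theorem column_sum_norm_le_of_ward {R : Type*} [Norm R] {n : ℕ} {A : Matrix (Fin n) (Fin n) R}
    {C η : ℝ} (hC : 0 ≤ C) (hη : 0 < η) (hn : 0 < n) (hsym : ∀ a b, ‖A a b‖ = ‖A b a‖)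
    (hward : ∀ a : Fin n, (1 / (n : ℝ)) * ∑ b, ‖A a b‖ ^ 2 ≤ C / (n * η)) (y : Fin n) :
    ∑ x, ‖A x y‖ ≤ Fintype.card (Fin n) * √(C / (n * η)) := by
  have hn' : (0 : ℝ) < n := by exact_mod_cast hn
  refine sum_le_card_mul_of_sum_sq_le (Real.sqrt_nonneg _) ?_
  rw [Real.sq_sqrt (by positivity), Fintype.card_fin]
  simp_rw [hsym _ y]
  exact (inv_mul_le_iff₀ hn').mp (by simpa using hward y)

theorem graph_resolvent_bound_marked_general (m n E : ℕ) (j : Fin n)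
    (edges : Fin E → (Fin m ⊕ Unit) × (Fin m ⊕ Unit))
    (hconn : (SimpleGraph.fromRel
      (fun a b => ∃ k : Fin E, edges k = (a, b))).Connected)
    (η C : ℝ) (hη : 0 < η) (hC : 1 ≤ C)
    (A : Matrix (Fin n) (Fin n) ℂ)
    (hsym : ∀ a b, ‖A a b‖ = ‖A b a‖)
    (hbd : ∀ a b, ‖A a b‖ ≤ C)
    (hward : ∀ a : Fin n, (1 / (n : ℝ)) * ∑ b, ‖A a b‖ ^ 2 ≤ C / (n * η)) :
    (1 / (n : ℝ) ^ m) * ∑ i : Fin m → Fin n, ∏ k : Fin E,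
        ‖A (Sum.elim i (fun _ => j) (edges k).1)
          (Sum.elim i (fun _ => j) (edges k).2)‖
      ≤ C ^ (E + m) * ((n : ℝ) * η) ^ (-((m : ℝ) / 2)) := by
  obtain ⟨D, hD⟩ := exists_descending_edge_of_connected hconn (.inr ())
  choose p σ hσ hpD using fun v : Fin m => hD (.inl v) Sum.inl_ne_inr
  have hn : (0 : ℝ) < n := by exact_mod_cast j.pos
  have hcol := column_sum_norm_le_of_ward (zero_le_one.trans hC) hη j.pos hsym hward
  set B := √(C / (n * η))
  have hedges (i : Fin m → Fin n) : ∏ k, ‖A (Sum.elim i (fun _ => j) (edges k).1)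
        (Sum.elim i (fun _ => j) (edges k).2)‖
      ≤ C ^ (E - m) * ∏ v, ‖A (i v) (Sum.elim i (fun _ => j) (p v))‖ := by
    set w : Fin m ⊕ Unit → Fin n := Sum.elim i (fun _ => j)
    have hsub := prod_le_pow_mul_prod_comp (f := fun k => ‖A (w (edges k).1) (w (edges k).2)‖)
      (fun _ => hbd _ _) (fun _ => norm_nonneg _)
      (injective_of_descending_edges Sum.inl_injective hσ hpD)
    rw [Fintype.card_fin, Fintype.card_fin] at hsub
    refine hsub.trans_eq (congrArg _ (prod_congr rfl fun v _ => ?_))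
    rcases hσ v with h | h <;> simp [w, h, hsym]
  have : Nonempty (Fin n) := ⟨j⟩
  have htree := sum_prod_tree_le (fun x y => norm_nonneg (A x y)) hcol (fun _ => j) hpD univ
  calc (1 / (n : ℝ) ^ m) * ∑ i : Fin m → Fin n, ∏ k : Fin E,
        ‖A (Sum.elim i (fun _ => j) (edges k).1) (Sum.elim i (fun _ => j) (edges k).2)‖
      ≤ (1 / (n : ℝ) ^ m) * (C ^ (E - m) * (B ^ m * n ^ m)) := by
        gcongr
        refine (sum_le_sum fun i _ => hedges i).trans ?_
        rw [← mul_sum]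
        gcongr
        simpa using htree
    _ = C ^ (E - m) * B ^ m := by field_simp
    _ ≤ C ^ (E - m) * (C ^ m * ((n : ℝ) * η) ^ (-((m : ℝ) / 2))) := by
        gcongr
        exact sqrt_div_pow_le hC (by positivity) m
    _ ≤ C ^ (E + m) * ((n : ℝ) * η) ^ (-((m : ℝ) / 2)) := by
        rw [← mul_assoc, ← pow_add]
        gcongr
        omega

/-- Graph bound with a marked (white) vertex: if `𝒢` is a connected graph on `m` black
vertices together with one white vertex carrying a fixed index `j`, given by an edge list
of `E` edges, and `A` is an `n×n` complex matrix with symmetric absolute values, entries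
bounded by `C ≥ 1`, and Ward-type bound `(1/n) ∑_b |A_{ab}|² ≤ C/(nη)`, then
`(1/n^m) ∑_{i₁,…,i_m} ∏_{(a,b)∈𝒢} |A_{i_a i_b}| ≤ C^{E+m} (nη)^{-m/2}`, where the black
vertex indices are summed and the white vertex index is fixed to `j`. -/
theorem graph_resolvent_bound_marked (m n E : ℕ) (j : Fin n)
    (edges : Fin E → (Fin m ⊕ Unit) × (Fin m ⊕ Unit))
    (hconn : (SimpleGraph.fromRel
      (fun a b => ∃ k : Fin E, edges k = (a, b))).Connected)
    (η C : ℝ) (hη : 0 < η) (hC : 1 ≤ C) (hn : 0 < n)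
    (A : Matrix (Fin n) (Fin n) ℂ)
    (hsym : ∀ a b, ‖A a b‖ = ‖A b a‖)
    (hbd : ∀ a b, ‖A a b‖ ≤ C)
    (hward : ∀ a : Fin n, (1 / (n : ℝ)) * ∑ b, ‖A a b‖ ^ 2 ≤ C / (n * η)) :
    (1 / (n : ℝ) ^ m) * ∑ i : Fin m → Fin n, ∏ k : Fin E,
        ‖A (Sum.elim i (fun _ => j) (edges k).1)
          (Sum.elim i (fun _ => j) (edges k).2)‖
      ≤ C ^ (E + m) * ((n : ℝ) * η) ^ (-((m : ℝ) / 2)) :=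
  graph_resolvent_bound_marked_general m n E j edges hconn η C hη hC A hsym hbd hward
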